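/- Under the MIMO continuous-time adaptive law setup, the parameter estimates are uniformly bounded, the normalized estimation error satisfies ∫_0^∞ ‖ε(t)‖²/m(t)² dt < ∞ and sup_{t ≥ 0} ‖ε(t)‖/m(t) < ∞, and the parameter derivatives satisfy sup_{t ≥ 0} ‖dΘ/dt(t)‖ < ∞, sup_{t ≥ 0} ‖dΨ/dt(t)‖ < ∞, ∫_0^∞ ‖dΘ/dt(t)‖² dt < ∞, and ∫_0^∞ ‖dΨ/dt(t)‖² dt < ∞ (i.e. Θ, Ψ ∈ L^∞, ε/m ∈ L² ∩ L^∞, and dΘ/dt, dΨ/dt ∈ L² ∩ L^∞). -/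

import Mathlib

/-
The Lyapunov function is `V = tr (Θ̃ Γ_p Θ̃ᵀ) + tr (Ψ̃ᵀ Γ⁻¹ Ψ̃)` with `Θ̃ = Θ - Θ*`, `Ψ̃ = Ψ - K_p` and
`Γ_p = K_pᵀ S_p⁻¹`. Along the adaptive laws `dV/dt = -2 ‖ε‖² / m²`: since `S_pᵀ Γ_p = K_p`, the two
gradient terms add up to `ε ⬝ (K_p Θ̃ᵀ ζ + Ψ̃ ξ) = ε ⬝ ε`. Hence `V` is nonincreasing, which bounds
`Θ̃` and `Ψ̃` because `Γ_p` and `Γ⁻¹` are positive definite, and `∫₀^∞ ‖ε‖² / m² ≤ V(0) / 2`.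
As `‖ζ‖, ‖ξ‖ ≤ m`, the error equation gives `‖ε‖ ≤ C m`, and the laws give
`‖dΘ/dt‖², ‖dΨ/dt‖² ≤ const · ‖ε‖² / m²`, so the derivatives inherit `L² ∩ L^∞` from `ε / m`.
-/

open Matrix BigOperators MeasureTheory

open Set Filter

section LyapunovIntegrals

variable {V g : ℝ → ℝ}

theorem integrableOn_Ioc_of_hasDerivAt_neg (hV : ∀ t, 0 ≤ t → HasDerivAt V (-g t) t)
    (hg : ∀ t, 0 ≤ t → 0 ≤ g t) (b : ℝ) : IntegrableOn g (Ioc 0 b) := by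
  have hcont : ContinuousOn (-V) (Icc 0 b) := fun t ht =>
    (hV t ht.1).continuousAt.neg.continuousWithinAt
  simpa using intervalIntegral.integrableOn_deriv_of_nonneg hcont
    (fun t ht => by simpa using (hV t ht.1.le).neg) fun t ht => hg t ht.1.le

theorem intervalIntegral_eq_sub_of_hasDerivAt_neg (hV : ∀ t, 0 ≤ t → HasDerivAt V (-g t) t)
    (hg : ∀ t, 0 ≤ t → 0 ≤ g t) {b : ℝ} (hb : 0 ≤ b) : ∫ t in 0..b, g t = V 0 - V b := by
  have hFTC := intervalIntegral.integral_eq_sub_of_hasDerivAt (fun t ht => hV t ?_)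
    ((intervalIntegrable_iff_integrableOn_Ioc_of_le hb).2
      (integrableOn_Ioc_of_hasDerivAt_neg hV hg b)).neg
  · rw [intervalIntegral.integral_neg] at hFTC
    linarith
  · exact (uIcc_of_le hb ▸ ht).1

theorem le_of_hasDerivAt_neg (hV : ∀ t, 0 ≤ t → HasDerivAt V (-g t) t)
    (hg : ∀ t, 0 ≤ t → 0 ≤ g t) {b : ℝ} (hb : 0 ≤ b) : V b ≤ V 0 := by
  have := intervalIntegral.integral_nonneg (μ := volume) hb fun t ht => hg t ht.1
  linarith [intervalIntegral_eq_sub_of_hasDerivAt_neg hV hg hb]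

theorem integrableOn_Ici_of_hasDerivAt_neg (hV : ∀ t, 0 ≤ t → HasDerivAt V (-g t) t)
    (hg : ∀ t, 0 ≤ t → 0 ≤ g t) (hV0 : ∀ t, 0 ≤ t → 0 ≤ V t) : IntegrableOn g (Ici 0) := by
  rw [integrableOn_Ici_iff_integrableOn_Ioi]
  refine integrableOn_Ioi_of_intervalIntegral_norm_bounded (V 0) 0
    (integrableOn_Ioc_of_hasDerivAt_neg hV hg) tendsto_id ?_
  filter_upwards [eventually_ge_atTop 0] with b hb
  rw [intervalIntegral.integral_congr fun t ht => Real.norm_of_nonneg (hg t ?_),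
    intervalIntegral_eq_sub_of_hasDerivAt_neg hV hg hb]
  · linarith [hV0 b hb]
  · exact (uIcc_of_le hb ▸ ht).1

theorem measurable_of_hasDerivAt {F F' : ℝ → ℝ} (hF : ∀ t, HasDerivAt F (F' t) t) :
    Measurable F' := by
  simpa only [funext fun t => (hF t).deriv] using measurable_deriv F

end LyapunovIntegrals

section FrobeniusBounds

variable {n k l p : Type*} [Fintype n] [Fintype k] [Fintype l] [Fintype p]

theorem dotProduct_self_nonneg (v : n → ℝ) : 0 ≤ v ⬝ᵥ v :=
  Finset.sum_nonneg fun _ _ => mul_self_nonneg _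

theorem sum_sq_transpose (A : Matrix n k ℝ) : ∑ i, ∑ j, Aᵀ i j ^ 2 = ∑ i, ∑ j, A i j ^ 2 :=
  Finset.sum_comm

theorem dotProduct_self_add_le (u v : n → ℝ) :
    (u + v) ⬝ᵥ (u + v) ≤ 2 * (u ⬝ᵥ u) + 2 * (v ⬝ᵥ v) := by
  simp only [dotProduct, Pi.add_apply, Finset.mul_sum, ← Finset.sum_add_distrib]
  exact Finset.sum_le_sum fun i _ => by nlinarith [sq_nonneg (u i - v i)]

theorem sum_sq_le_of_sum_sq_sub_le {A B : Matrix n k ℝ} {a : ℝ}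
    (h : ∑ i, ∑ j, (A - B) i j ^ 2 ≤ a) :
    ∑ i, ∑ j, A i j ^ 2 ≤ 2 * (a + ∑ i, ∑ j, B i j ^ 2) := by
  calc ∑ i, ∑ j, A i j ^ 2 ≤ ∑ i, ∑ j, 2 * ((A - B) i j ^ 2 + B i j ^ 2) := by
        gcongr with i _ j _
        simpa using add_sq_le (a := (A - B) i j) (b := B i j)
    _ ≤ 2 * (a + ∑ i, ∑ j, B i j ^ 2) := by
        simp only [← Finset.mul_sum, Finset.sum_add_distrib]
        gcongr

theorem sum_sq_vecMulVec (u : n → ℝ) (v : k → ℝ) :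
    ∑ i, ∑ j, vecMulVec u v i j ^ 2 = (u ⬝ᵥ u) * (v ⬝ᵥ v) := by
  simp only [vecMulVec_apply, dotProduct, Finset.sum_mul_sum]
  exact Finset.sum_congr rfl fun i _ => Finset.sum_congr rfl fun j _ => by ring

theorem dotProduct_self_mulVec_le (A : Matrix k l ℝ) (v : l → ℝ) :
    (A *ᵥ v) ⬝ᵥ (A *ᵥ v) ≤ (∑ i, ∑ j, A i j ^ 2) * (v ⬝ᵥ v) := by
  rw [Finset.sum_mul]
  refine Finset.sum_le_sum fun i _ => ?_
  simpa [mulVec, dotProduct, sq] using Finset.sum_mul_sq_le_sq_mul_sq Finset.univ (A i) v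

theorem sum_sq_le_of_eq_smul_vecMulVec {D : Matrix k n ℝ} {S : Matrix k l ℝ} {e : l → ℝ}
    {u : n → ℝ} {m : ℝ} (hm : 0 < m) (hu : u ⬝ᵥ u ≤ m ^ 2)
    (hD : D = -(m ^ 2)⁻¹ • vecMulVec (S *ᵥ e) u) :
    ∑ i, ∑ j, D i j ^ 2 ≤ (∑ i, ∑ j, S i j ^ 2) * (e ⬝ᵥ e / m ^ 2) := by
  calc ∑ i, ∑ j, D i j ^ 2 = ((m ^ 2)⁻¹) ^ 2 * ((S *ᵥ e) ⬝ᵥ (S *ᵥ e) * (u ⬝ᵥ u)) := by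
        simp only [hD, Matrix.smul_apply, smul_eq_mul, mul_pow, neg_sq, ← Finset.mul_sum,
          sum_sq_vecMulVec]
    _ ≤ ((m ^ 2)⁻¹) ^ 2 * ((∑ i, ∑ j, S i j ^ 2) * (e ⬝ᵥ e) * m ^ 2) := by
        have := dotProduct_self_nonneg e
        gcongr
        · exact dotProduct_self_nonneg _
        · exact dotProduct_self_mulVec_le S e
    _ = (∑ i, ∑ j, S i j ^ 2) * (e ⬝ᵥ e / m ^ 2) := by
        field_simp

theorem dotProduct_self_le_of_eq_add {K : Matrix l k ℝ} {P : Matrix n k ℝ} {Q : Matrix l p ℝ}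
    {z : n → ℝ} {x : p → ℝ} {e : l → ℝ} {a b r : ℝ}
    (he : e = K *ᵥ (Pᵀ *ᵥ z) + Q *ᵥ x) (hP : ∑ i, ∑ j, P i j ^ 2 ≤ a)
    (hQ : ∑ i, ∑ j, Q i j ^ 2 ≤ b) (hz : z ⬝ᵥ z ≤ r) (hx : x ⬝ᵥ x ≤ r) :
    e ⬝ᵥ e ≤ 2 * ((∑ i, ∑ j, K i j ^ 2) * a + b) * r := by
  have hPt : ∑ i, ∑ j, Pᵀ i j ^ 2 ≤ a := sum_sq_transpose P ▸ hP
  have hz0 := dotProduct_self_nonneg z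
  have hx0 := dotProduct_self_nonneg x
  have ha : 0 ≤ a := (by positivity : (0 : ℝ) ≤ _).trans hP
  have hb : 0 ≤ b := (by positivity : (0 : ℝ) ≤ _).trans hQ
  have hy : (Pᵀ *ᵥ z) ⬝ᵥ (Pᵀ *ᵥ z) ≤ a * r :=
    (dotProduct_self_mulVec_le _ _).trans (by gcongr)
  have hKy : (K *ᵥ (Pᵀ *ᵥ z)) ⬝ᵥ (K *ᵥ (Pᵀ *ᵥ z)) ≤ (∑ i, ∑ j, K i j ^ 2) * (a * r) :=
    (dotProduct_self_mulVec_le _ _).trans (by gcongr)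
  have hQx : (Q *ᵥ x) ⬝ᵥ (Q *ᵥ x) ≤ b * r :=
    (dotProduct_self_mulVec_le _ _).trans (by gcongr)
  rw [he]
  linarith [dotProduct_self_add_le (K *ᵥ (Pᵀ *ᵥ z)) (Q *ᵥ x)]

theorem bounded_and_integrableOn_of_le_mul {D : ℝ → Matrix n k ℝ} {f : ℝ → ℝ} {K C : ℝ}
    (hD : ∀ i j, Measurable fun t => D t i j) (hf : IntegrableOn f (Ici 0))
    (hfC : ∀ t, 0 ≤ t → f t ≤ C) (hDf : ∀ t, 0 ≤ t → ∑ i, ∑ j, D t i j ^ 2 ≤ K * f t)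
    (hK : 0 ≤ K) :
    (∃ C, ∀ t, 0 ≤ t → √(∑ i, ∑ j, D t i j ^ 2) ≤ C) ∧
      IntegrableOn (fun t => ∑ i, ∑ j, D t i j ^ 2) (Ici 0) := by
  refine ⟨⟨√(K * C), fun t ht => Real.sqrt_le_sqrt
    ((hDf t ht).trans (mul_le_mul_of_nonneg_left (hfC t ht) hK))⟩, ?_⟩
  refine (hf.const_mul K).mono' (by fun_prop : Measurable _).aestronglyMeasurable
    (ae_restrict_of_forall_mem measurableSet_Ici fun t ht => ?_)
  rw [Real.norm_of_nonneg (by positivity)]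
  exact hDf t ht

end FrobeniusBounds

section PositiveDefinite

variable {n k : Type*} [Fintype n] [Fintype k]

open scoped MatrixOrder in
theorem Matrix.PosDef.exists_pos_mul_dotProduct_le [DecidableEq k] {G : Matrix k k ℝ}
    (hG : G.PosDef) : ∃ c > 0, ∀ v : k → ℝ, c * (v ⬝ᵥ v) ≤ v ⬝ᵥ G *ᵥ v := by
  cases isEmpty_or_nonempty k
  · exact ⟨1, one_pos, fun v => by simp [dotProduct]⟩
  obtain ⟨c, hc, hcG⟩ := (CFC.exists_pos_algebraMap_le_iff hG.isHermitian.isSelfAdjoint).2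
    fun x hx => hG.isStrictlyPositive.spectrum_pos hx
  refine ⟨c, hc, fun v => ?_⟩
  simpa [sub_mulVec, dotProduct_sub, Algebra.algebraMap_eq_smul_one, smul_mulVec, sub_nonneg]
    using (Matrix.le_iff.1 hcG).dotProduct_mulVec_nonneg v

theorem Matrix.trace_mul_mul_transpose (P : Matrix n k ℝ) (G : Matrix k k ℝ) :
    trace (P * G * Pᵀ) = ∑ i, P i ⬝ᵥ G *ᵥ P i := by
  simp only [trace, diag, dotProduct_mulVec]
  rfl

theorem Matrix.PosDef.exists_pos_mul_sum_sq_le_trace [DecidableEq k] {G : Matrix k k ℝ}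
    (hG : G.PosDef) :
    ∃ c > 0, ∀ P : Matrix n k ℝ, c * ∑ i, ∑ j, P i j ^ 2 ≤ trace (P * G * Pᵀ) := by
  obtain ⟨c, hc, hcG⟩ := hG.exists_pos_mul_dotProduct_le
  refine ⟨c, hc, fun P => ?_⟩
  rw [trace_mul_mul_transpose, Finset.mul_sum]
  exact Finset.sum_le_sum fun i _ => by simpa [dotProduct, sq] using hcG (P i)

/-- As `K * S` is symmetric, the witness `Sᵀ⁻¹ (K S) S⁻¹` equals `Kᵀ S⁻¹`, the paper's `Γ_p`. -/
theorem exists_posDef_transpose_mul_eq [DecidableEq k] {K S : Matrix k k ℝ} (hS : IsUnit S.det)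
    (hKS : (K * S).PosDef) : ∃ G : Matrix k k ℝ, G.PosDef ∧ Sᵀ * G = K := by
  refine ⟨(S⁻¹)ᵀ * (K * S) * S⁻¹, ?_, ?_⟩
  · simpa using hKS.conjTranspose_mul_mul_same
      (mulVec_injective_of_isUnit ((isUnit_iff_isUnit_det _).2 (isUnit_nonsing_inv_det S hS)))
  · rw [← Matrix.mul_assoc, ← Matrix.mul_assoc, ← transpose_mul, nonsing_inv_mul S hS,
      transpose_one, Matrix.one_mul, Matrix.mul_assoc, mul_nonsing_inv S hS, Matrix.mul_one]

end PositiveDefinite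

section GradientLaws

variable {n k l : Type*} [Fintype n] [Fintype k] [Fintype l]

theorem trace_vecMulVec_mul (u : n → ℝ) (w : k → ℝ) (X : Matrix k n ℝ) :
    trace (vecMulVec u w * X) = w ⬝ᵥ X *ᵥ u := by
  rw [vecMulVec_mul, trace_vecMulVec, dotProduct_comm, dotProduct_mulVec]

theorem hasDerivAt_trace_mul_mul_transpose {P : ℝ → Matrix n k ℝ} {P' : Matrix n k ℝ} {t : ℝ}
    (hP : ∀ i j, HasDerivAt (fun s => P s i j) (P' i j) t) (G : Matrix k k ℝ) :
    HasDerivAt (fun s => trace (P s * G * (P s)ᵀ))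
      (trace (P' * G * (P t)ᵀ) + trace (P t * G * P'ᵀ)) t := by
  simp only [trace, diag, mul_apply, transpose_apply, ← Finset.sum_add_distrib]
  exact HasDerivAt.fun_sum fun i _ => HasDerivAt.fun_sum fun j _ =>
    (HasDerivAt.fun_sum fun l _ => (hP i l).mul_const (G l j)).mul (hP i j)

theorem hasDerivAt_trace_of_gradient_law {P : ℝ → Matrix n k ℝ} {P' : Matrix n k ℝ} {t c : ℝ}
    {G : Matrix k k ℝ} (hG : G.IsSymm) (S : Matrix k l ℝ) (e : l → ℝ) (u : n → ℝ)
    (hP : ∀ i j, HasDerivAt (fun s => P s i j) (P' i j) t)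
    (hlaw : P'ᵀ = -c • vecMulVec (S *ᵥ e) u) :
    HasDerivAt (fun s => trace (P s * G * (P s)ᵀ))
      (-(2 * c * (e ⬝ᵥ (Sᵀ * G) *ᵥ ((P t)ᵀ *ᵥ u)))) t := by
  convert hasDerivAt_trace_mul_mul_transpose hP G using 1
  have hP' : P' = -c • vecMulVec u (S *ᵥ e) := by
    rw [← transpose_transpose P', hlaw, transpose_smul, transpose_vecMulVec]
  -- the two product-rule terms are transposes of each other because `G` is symmetric
  rw [← trace_transpose (P t * G * P'ᵀ)]
  simp only [transpose_mul, transpose_transpose, hG.eq, ← Matrix.mul_assoc]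
  rw [hP', Matrix.smul_mul, Matrix.smul_mul, trace_smul, Matrix.mul_assoc, trace_vecMulVec_mul,
    ← mulVec_mulVec, ← mulVec_mulVec, dotProduct_mulVec, vecMul_transpose, smul_eq_mul]
  ring

theorem hasDerivAt_lyapunov_of_adaptive_laws [DecidableEq k] {Θ : ℝ → Matrix n k ℝ}
    {Ψ : ℝ → Matrix k k ℝ} {Θ' : Matrix n k ℝ} {Ψ' Kp Sp Γ Γp : Matrix k k ℝ}
    {Θs : Matrix n k ℝ} {ζ : n → ℝ} {ξ ε : k → ℝ} {c t : ℝ}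
    (hΓp : Γp.IsSymm) (hSpΓp : Spᵀ * Γp = Kp) (hΓ : Γ.PosDef)
    (hΘ : ∀ i j, HasDerivAt (fun s => Θ s i j) (Θ' i j) t)
    (hΨ : ∀ i j, HasDerivAt (fun s => Ψ s i j) (Ψ' i j) t)
    (hε : ε = Kp *ᵥ ((Θ t - Θs)ᵀ *ᵥ ζ) + (Ψ t - Kp) *ᵥ ξ)
    (hΘlaw : Θ'ᵀ = -c • vecMulVec (Sp *ᵥ ε) ζ) (hΨlaw : Ψ' = -c • vecMulVec (Γ *ᵥ ε) ξ) :
    HasDerivAt (fun s => trace ((Θ s - Θs) * Γp * (Θ s - Θs)ᵀ)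
      + trace ((Ψ s - Kp)ᵀ * Γ⁻¹ * (Ψ s - Kp))) (-(2 * c * (ε ⬝ᵥ ε))) t := by
  have hΓsymm : Γ.IsSymm := isHermitian_iff_isSymm.1 hΓ.isHermitian
  have hΓΓ : Γᵀ * Γ⁻¹ = 1 := by
    rw [hΓsymm.eq, mul_nonsing_inv Γ ((isUnit_iff_isUnit_det Γ).1 hΓ.isUnit)]
  have hΘV := hasDerivAt_trace_of_gradient_law (P := fun s => Θ s - Θs) hΓp Sp ε ζ
    (fun i j => (hΘ i j).sub_const (Θs i j)) hΘlaw
  have hΨV := hasDerivAt_trace_of_gradient_law (P := fun s => (Ψ s - Kp)ᵀ) (P' := Ψ'ᵀ)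
    (isHermitian_iff_isSymm.1 hΓ.inv.isHermitian) Γ ε ξ
    (fun i j => (hΨ j i).sub_const (Kp j i)) (by rwa [transpose_transpose])
  simp only [transpose_transpose] at hΨV
  refine (hΘV.add hΨV).congr_deriv ?_
  rw [hSpΓp, hΓΓ, one_mulVec, hε]
  simp only [dotProduct_add]
  ring

theorem adaptive_law_lyapunov_bounds [DecidableEq k] {Θ Θ' : ℝ → Matrix n k ℝ}
    {Ψ Ψ' : ℝ → Matrix k k ℝ} {Θs : Matrix n k ℝ} {Kp Sp Γ : Matrix k k ℝ} {ζ : ℝ → n → ℝ}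
    {ξ ε : ℝ → k → ℝ} {m : ℝ → ℝ} (hSp : IsUnit Sp.det) (hKS : (Kp * Sp).PosDef)
    (hΓ : Γ.PosDef) (hΘ : ∀ t i j, HasDerivAt (fun s => Θ s i j) (Θ' t i j) t)
    (hΨ : ∀ t i j, HasDerivAt (fun s => Ψ s i j) (Ψ' t i j) t)
    (hε : ∀ t, ε t = Kp *ᵥ ((Θ t - Θs)ᵀ *ᵥ ζ t) + (Ψ t - Kp) *ᵥ ξ t)
    (hΘlaw : ∀ t, 0 ≤ t → (Θ' t)ᵀ = -(m t ^ 2)⁻¹ • vecMulVec (Sp *ᵥ ε t) (ζ t))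
    (hΨlaw : ∀ t, 0 ≤ t → Ψ' t = -(m t ^ 2)⁻¹ • vecMulVec (Γ *ᵥ ε t) (ξ t)) :
    IntegrableOn (fun t => ε t ⬝ᵥ ε t / m t ^ 2) (Ici 0) ∧ ∃ C, ∀ t, 0 ≤ t →
      ∑ i, ∑ j, (Θ t - Θs) i j ^ 2 ≤ C ∧ ∑ i, ∑ j, (Ψ t - Kp) i j ^ 2 ≤ C := by
  obtain ⟨Γp, hΓp, hSpΓp⟩ := exists_posDef_transpose_mul_eq hSp hKS
  set V : ℝ → ℝ := fun s => trace ((Θ s - Θs) * Γp * (Θ s - Θs)ᵀ)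
    + trace ((Ψ s - Kp)ᵀ * Γ⁻¹ * (Ψ s - Kp))
  have hV' : ∀ t, 0 ≤ t → HasDerivAt V (-(2 * (ε t ⬝ᵥ ε t / m t ^ 2))) t := fun t ht =>
    (hasDerivAt_lyapunov_of_adaptive_laws (isHermitian_iff_isSymm.1 hΓp.isHermitian) hSpΓp hΓ
      (hΘ t) (hΨ t) (hε t) (hΘlaw t ht) (hΨlaw t ht)).congr_deriv (by ring)
  have hg : ∀ t, 0 ≤ t → 0 ≤ 2 * (ε t ⬝ᵥ ε t / m t ^ 2) := fun t _ => by
    have := dotProduct_self_nonneg (ε t)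
    positivity
  obtain ⟨cΘ, hcΘ, hΘV⟩ := hΓp.exists_pos_mul_sum_sq_le_trace (n := n)
  obtain ⟨cΨ, hcΨ, hΨV⟩ := hΓ.inv.exists_pos_mul_sum_sq_le_trace (n := k)
  have hc : 0 < min cΘ cΨ := lt_min hcΘ hcΨ
  have hV_ge : ∀ t, min cΘ cΨ * (∑ i, ∑ j, (Θ t - Θs) i j ^ 2 + ∑ i, ∑ j, (Ψ t - Kp)ᵀ i j ^ 2)
      ≤ V t := fun t => by
    rw [mul_add]
    exact le_trans (by gcongr; exacts [min_le_left _ _, min_le_right _ _])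
      (add_le_add (hΘV _) (hΨV _))
  have hV0 : ∀ t, 0 ≤ t → 0 ≤ V t := fun t _ =>
    (mul_nonneg hc.le (by positivity)).trans (hV_ge t)
  refine ⟨by simpa [IntegrableOn] using
    (integrableOn_Ici_of_hasDerivAt_neg hV' hg hV0).div_const 2, V 0 / min cΘ cΨ, fun t ht => ?_⟩
  have hsum := (hV_ge t).trans (le_of_hasDerivAt_neg hV' hg ht)
  rw [sum_sq_transpose, ← le_div_iff₀' hc] at hsum
  constructor <;> linarith [(by positivity : (0 : ℝ) ≤ ∑ i, ∑ j, (Θ t - Θs) i j ^ 2),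
    (by positivity : (0 : ℝ) ≤ ∑ i, ∑ j, (Ψ t - Kp) i j ^ 2)]

end GradientLaws

theorem normalizing_signal_bounds {a b m : ℝ} (ha : 0 ≤ a) (hb : 0 ≤ b)
    (hm : m = √(1 + a + b)) : 0 < m ∧ a ≤ m ^ 2 ∧ b ≤ m ^ 2 := by
  have hm_sq : m ^ 2 = 1 + a + b := by rw [hm]; exact Real.sq_sqrt (by linarith)
  exact ⟨hm ▸ Real.sqrt_pos.2 (by linarith), by linarith, by linarith⟩

theorem mimo_continuous_adaptive_law_properties_general
    (N M : ℕ)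
    (ζ : ℝ → Fin N → ℝ) (ξ : ℝ → Fin M → ℝ)
    (m : ℝ → ℝ)
    (hm : ∀ t, m t = Real.sqrt (1 + (∑ i, ζ t i * ζ t i) + ∑ j, ξ t j * ξ t j))
    (Kp Sp : Matrix (Fin M) (Fin M) ℝ) (hSp : IsUnit Sp.det)
    (hKS : (Kp * Sp).PosDef)
    (Γ : Matrix (Fin M) (Fin M) ℝ) (hΓ : Γ.PosDef)
    (Θs : Matrix (Fin N) (Fin M) ℝ)
    (Θ Θ' : ℝ → Matrix (Fin N) (Fin M) ℝ) (Ψ Ψ' : ℝ → Matrix (Fin M) (Fin M) ℝ)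
    (hΘd : ∀ t i j, HasDerivAt (fun s => Θ s i j) (Θ' t i j) t)
    (hΨd : ∀ t i j, HasDerivAt (fun s => Ψ s i j) (Ψ' t i j) t)
    (ε : ℝ → Fin M → ℝ)
    (hε : ∀ t, ε t = Kp.mulVec ((Θ t - Θs)ᵀ.mulVec (ζ t)) + (Ψ t - Kp).mulVec (ξ t))
    (hΘlaw : ∀ t, 0 ≤ t →
      (Θ' t)ᵀ = -(m t ^ 2)⁻¹ • Matrix.vecMulVec (Sp.mulVec (ε t)) (ζ t))
    (hΨlaw : ∀ t, 0 ≤ t →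
      Ψ' t = -(m t ^ 2)⁻¹ • Matrix.vecMulVec (Γ.mulVec (ε t)) (ξ t)) :
    (∃ C : ℝ, ∀ t, 0 ≤ t → Real.sqrt (∑ i, ∑ j, (Θ t i j) ^ 2) ≤ C) ∧
    (∃ C : ℝ, ∀ t, 0 ≤ t → Real.sqrt (∑ i, ∑ j, (Ψ t i j) ^ 2) ≤ C) ∧
    IntegrableOn (fun t => (∑ j, ε t j * ε t j) / m t ^ 2) (Set.Ici (0 : ℝ)) ∧
    (∃ C : ℝ, ∀ t, 0 ≤ t → Real.sqrt (∑ j, ε t j * ε t j) / m t ≤ C) ∧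
    (∃ C : ℝ, ∀ t, 0 ≤ t → Real.sqrt (∑ i, ∑ j, (Θ' t i j) ^ 2) ≤ C) ∧
    (∃ C : ℝ, ∀ t, 0 ≤ t → Real.sqrt (∑ i, ∑ j, (Ψ' t i j) ^ 2) ≤ C) ∧
    IntegrableOn (fun t => ∑ i, ∑ j, (Θ' t i j) ^ 2) (Set.Ici (0 : ℝ)) ∧
    IntegrableOn (fun t => ∑ i, ∑ j, (Ψ' t i j) ^ 2) (Set.Ici (0 : ℝ)) := by
  have hm_bounds := fun t => normalizing_signal_bounds (dotProduct_self_nonneg (ζ t))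
    (dotProduct_self_nonneg (ξ t)) (hm t)
  obtain ⟨hf_int, C, hC⟩ := adaptive_law_lyapunov_bounds hSp hKS hΓ hΘd hΨd hε hΘlaw hΨlaw
  set Cε := 2 * ((∑ i, ∑ j, Kp i j ^ 2) * C + C)
  have hf_le : ∀ t, 0 ≤ t → ε t ⬝ᵥ ε t / m t ^ 2 ≤ Cε :=
    fun t ht => (div_le_iff₀ (pow_pos (hm_bounds t).1 2)).2 <| dotProduct_self_le_of_eq_add
      (hε t) (hC t ht).1 (hC t ht).2 (hm_bounds t).2.1 (hm_bounds t).2.2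
  obtain ⟨hΘ'_bdd, hΘ'_int⟩ := bounded_and_integrableOn_of_le_mul
    (fun i j => measurable_of_hasDerivAt (hΘd · i j)) hf_int hf_le (fun t ht =>
      sum_sq_transpose (Θ' t) ▸
        sum_sq_le_of_eq_smul_vecMulVec (hm_bounds t).1 (hm_bounds t).2.1 (hΘlaw t ht))
    (by positivity)
  obtain ⟨hΨ'_bdd, hΨ'_int⟩ := bounded_and_integrableOn_of_le_mul
    (fun i j => measurable_of_hasDerivAt (hΨd · i j)) hf_int hf_le (fun t ht =>
      sum_sq_le_of_eq_smul_vecMulVec (hm_bounds t).1 (hm_bounds t).2.2 (hΨlaw t ht))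
    (by positivity)
  refine ⟨⟨_, fun t ht => Real.sqrt_le_sqrt (sum_sq_le_of_sum_sq_sub_le (hC t ht).1)⟩,
    ⟨_, fun t ht => Real.sqrt_le_sqrt (sum_sq_le_of_sum_sq_sub_le (hC t ht).2)⟩, hf_int,
    ⟨√Cε, fun t ht => ?_⟩, hΘ'_bdd, hΨ'_bdd, hΘ'_int, hΨ'_int⟩
  rw [← Real.sqrt_sq (hm_bounds t).1.le, ← Real.sqrt_div' _ (sq_nonneg _)]
  exact Real.sqrt_le_sqrt (hf_le t ht)

/-- MIMO continuous-time adaptive laws (Lemma 3.1, continuous-time case):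
`Θ, Ψ ∈ L^∞`, `ε/m ∈ L² ∩ L^∞` and `dΘ/dt, dΨ/dt ∈ L² ∩ L^∞` on `[0, ∞)`
(Frobenius norms). -/
theorem mimo_continuous_adaptive_law_properties
    (N M : ℕ) (hN : 0 < N) (hM : 0 < M)
    (ζ : ℝ → Fin N → ℝ) (ξ : ℝ → Fin M → ℝ)
    (hζc : ∀ i, Continuous fun t => ζ t i)
    (hξc : ∀ j, Continuous fun t => ξ t j)
    (m : ℝ → ℝ)
    (hm : ∀ t, m t = Real.sqrt (1 + (∑ i, ζ t i * ζ t i) + ∑ j, ξ t j * ξ t j))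
    (Kp Sp : Matrix (Fin M) (Fin M) ℝ) (hSp : IsUnit Sp.det)
    (hKS : (Kp * Sp).PosDef)
    (Γ : Matrix (Fin M) (Fin M) ℝ) (hΓ : Γ.PosDef)
    (Θs : Matrix (Fin N) (Fin M) ℝ)
    (Θ Θ' : ℝ → Matrix (Fin N) (Fin M) ℝ) (Ψ Ψ' : ℝ → Matrix (Fin M) (Fin M) ℝ)
    (hΘd : ∀ t i j, HasDerivAt (fun s => Θ s i j) (Θ' t i j) t)
    (hΨd : ∀ t i j, HasDerivAt (fun s => Ψ s i j) (Ψ' t i j) t)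
    (ε : ℝ → Fin M → ℝ)
    (hε : ∀ t, ε t = Kp.mulVec ((Θ t - Θs)ᵀ.mulVec (ζ t)) + (Ψ t - Kp).mulVec (ξ t))
    (hΘlaw : ∀ t, 0 ≤ t →
      (Θ' t)ᵀ = -(m t ^ 2)⁻¹ • Matrix.vecMulVec (Sp.mulVec (ε t)) (ζ t))
    (hΨlaw : ∀ t, 0 ≤ t →
      Ψ' t = -(m t ^ 2)⁻¹ • Matrix.vecMulVec (Γ.mulVec (ε t)) (ξ t)) :
    (∃ C : ℝ, ∀ t, 0 ≤ t → Real.sqrt (∑ i, ∑ j, (Θ t i j) ^ 2) ≤ C) ∧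
    (∃ C : ℝ, ∀ t, 0 ≤ t → Real.sqrt (∑ i, ∑ j, (Ψ t i j) ^ 2) ≤ C) ∧
    IntegrableOn (fun t => (∑ j, ε t j * ε t j) / m t ^ 2) (Set.Ici (0 : ℝ)) ∧
    (∃ C : ℝ, ∀ t, 0 ≤ t → Real.sqrt (∑ j, ε t j * ε t j) / m t ≤ C) ∧
    (∃ C : ℝ, ∀ t, 0 ≤ t → Real.sqrt (∑ i, ∑ j, (Θ' t i j) ^ 2) ≤ C) ∧
    (∃ C : ℝ, ∀ t, 0 ≤ t → Real.sqrt (∑ i, ∑ j, (Ψ' t i j) ^ 2) ≤ C) ∧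
    IntegrableOn (fun t => ∑ i, ∑ j, (Θ' t i j) ^ 2) (Set.Ici (0 : ℝ)) ∧
    IntegrableOn (fun t => ∑ i, ∑ j, (Ψ' t i j) ^ 2) (Set.Ici (0 : ℝ)) :=
  mimo_continuous_adaptive_law_properties_general N M ζ ξ m hm Kp Sp hSp hKS Γ hΓ Θs Θ Θ' Ψ Ψ' hΘd
    hΨd ε hε hΘlaw hΨlaw
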